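/- arXiv:math/0607298 — 4 statements merged into one kernel-verified Lean document; each statement's English description precedes it below -/
import Mathlib

section
/- Let α be a partially ordered set and let f, g : ℤ → α be strictly antitone maps (k < l implies f(l) < f(k)) with the same range. Then there exists a unique integer c such that g(k) = f(k + c) for all k ∈ ℤ. -/
/-!
Both maps are order isomorphisms from `ℤ` onto their common range (ordered dually), so
`g = f ∘ e` for an order automorphism `e` of `ℤ`. Order isomorphisms preserve successors, so
`e (k + 1) = e k + 1`, and `e` is the translation by `e 0`.
-/

theorem Int.orderIso_apply_eq_add (e : ℤ ≃o ℤ) (k : ℤ) : e k = k + e 0 := by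
  have step (n : ℤ) : e (n + 1) = e n + 1 := by
    rw [← Order.succ_eq_add_one, e.map_succ, Order.succ_eq_add_one]
  induction k using Int.induction_on with
  | zero => simp
  | succ n ih => rw [step, ih]; ring
  | pred n ih =>
    have := step (-(n : ℤ) - 1)
    rw [sub_add_cancel] at this
    omega

theorem StrictAnti.exists_orderIso_of_range_eq {ι κ α : Type*} [LinearOrder ι] [LinearOrder κ]
    [Preorder α] {f : ι → α} {g : κ → α} (hf : StrictAnti f) (hg : StrictAnti g)
    (hr : Set.range f = Set.range g) : ∃ e : κ ≃o ι, ∀ k, g k = f (e k) := by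
  have hr' : Set.range (OrderDual.toDual ∘ g) = Set.range (OrderDual.toDual ∘ f) := by
    simp only [Set.range_comp, hr]
  refine ⟨(hg.dual_right.orderIso _).trans
    ((OrderIso.setCongr _ _ hr').trans (hf.dual_right.orderIso _).symm), fun k => ?_⟩
  exact (congrArg Subtype.val ((hf.dual_right.orderIso _).apply_symm_apply
    (OrderIso.setCongr _ _ hr' (hg.dual_right.orderIso _ k)))).symm

/-- Two strictly antitone maps `ℤ → α` with the same range differ by a unique
translation. -/
theorem stmt_10 {α : Type*} [PartialOrder α] (f g : ℤ → α)
    (hf : StrictAnti f) (hg : StrictAnti g) (hr : Set.range f = Set.range g) :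
    ∃! c : ℤ, ∀ k : ℤ, g k = f (k + c) := by
  obtain ⟨e, he⟩ := hf.exists_orderIso_of_range_eq hg hr
  refine ⟨e 0, fun k => by rw [he, Int.orderIso_apply_eq_add], fun c hc => hf.injective ?_⟩
  rw [← he 0, hc 0, zero_add]
end

section
/- Let A be a ring with orthogonal idempotents e₁, e₂ summing to 1, and let R be an additive subgroup of A such that: (a) R·R ⊆ R; (b) eᵢ·R·eⱼ ⊆ R for all i, j ∈ {1,2}; (c) for every r ∈ R, the element 1 + r is invertible in A and (1+r)⁻¹ ∈ 1 + R. Then every element of 1 + R factors as (1 + r⁻)·(1 + r⁰)·(1 + r⁺) with r⁻ ∈ R ∩ e₂Ae₁, r⁰ ∈ R ∩ (e₁Ae₁ + e₂Ae₂) and r⁺ ∈ R ∩ e₁Ae₂. -/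
/-- Iwahori decomposition for `1 + R`: every element of `1 + R` factors as
`(1 + r⁻)(1 + r⁰)(1 + r⁺)` with lower, diagonal and upper parts in `R`. -/
theorem stmt_16 {A : Type*} [Ring A] (e₁ e₂ : A)
    (hsum : e₁ + e₂ = 1) (h11 : e₁ * e₁ = e₁) (h22 : e₂ * e₂ = e₂)
    (h12 : e₁ * e₂ = 0) (h21 : e₂ * e₁ = 0)
    (R : AddSubgroup A)
    (hmul : ∀ x ∈ R, ∀ y ∈ R, x * y ∈ R)
    (hblock : ∀ x ∈ R, ∀ i ∈ ({e₁, e₂} : Set A), ∀ j ∈ ({e₁, e₂} : Set A), i * x * j ∈ R)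
    (hinv : ∀ r ∈ R, ∃ r' ∈ R, (1 + r) * (1 + r') = 1 ∧ (1 + r') * (1 + r) = 1) :
    ∀ r ∈ R, ∃ a ∈ R, ∃ b ∈ R, ∃ c ∈ R,
      e₂ * a * e₁ = a ∧ e₁ * b * e₁ + e₂ * b * e₂ = b ∧ e₁ * c * e₂ = c ∧
      1 + r = (1 + a) * (1 + b) * (1 + c) := by
  intro r hr
  have he1 : e₁ ∈ ({e₁, e₂} : Set A) := Set.mem_insert _ _
  have he2 : e₂ ∈ ({e₁, e₂} : Set A) := Set.mem_insert_iff.mpr (Or.inr rfl)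
  set d₁ := e₁ * r * e₁ with hd₁def
  set n := e₂ * r * e₁ with hndef
  set m := e₁ * r * e₂ with hmdef
  set d₂ := e₂ * r * e₂ with hd₂def
  have hd₁R : d₁ ∈ R := hblock r hr e₁ he1 e₁ he1
  have hnR : n ∈ R := hblock r hr e₂ he2 e₁ he1
  have hmR : m ∈ R := hblock r hr e₁ he1 e₂ he2
  have hd₂R : d₂ ∈ R := hblock r hr e₂ he2 e₂ he2
  obtain ⟨u', hu'R, huv, hvu⟩ := hinv d₁ hd₁R
  -- absorption / annihilation facts
  have l1d₁ : e₁ * d₁ = d₁ := by rw [hd₁def]; linear_combination (norm := noncomm_ring) h11 * (r * e₁)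
  have rd₁1 : d₁ * e₁ = d₁ := by rw [hd₁def]; linear_combination (norm := noncomm_ring) (e₁ * r) * h11
  have l2d₁ : e₂ * d₁ = 0 := by rw [hd₁def]; linear_combination (norm := noncomm_ring) h21 * (r * e₁)
  have rd₁2 : d₁ * e₂ = 0 := by rw [hd₁def]; linear_combination (norm := noncomm_ring) (e₁ * r) * h12
  have l2d₂ : e₂ * d₂ = d₂ := by rw [hd₂def]; linear_combination (norm := noncomm_ring) h22 * (r * e₂)
  have rd₂2 : d₂ * e₂ = d₂ := by rw [hd₂def]; linear_combination (norm := noncomm_ring) (e₂ * r) * h22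
  have l1d₂ : e₁ * d₂ = 0 := by rw [hd₂def]; linear_combination (norm := noncomm_ring) h12 * (r * e₂)
  have rd₂1 : d₂ * e₁ = 0 := by rw [hd₂def]; linear_combination (norm := noncomm_ring) (e₂ * r) * h21
  have l2n : e₂ * n = n := by rw [hndef]; linear_combination (norm := noncomm_ring) h22 * (r * e₁)
  have rn1 : n * e₁ = n := by rw [hndef]; linear_combination (norm := noncomm_ring) (e₂ * r) * h11
  have l1n : e₁ * n = 0 := by rw [hndef]; linear_combination (norm := noncomm_ring) h12 * (r * e₁)
  have rn2 : n * e₂ = 0 := by rw [hndef]; linear_combination (norm := noncomm_ring) (e₂ * r) * h12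
  have l1m : e₁ * m = m := by rw [hmdef]; linear_combination (norm := noncomm_ring) h11 * (r * e₂)
  have rm2 : m * e₂ = m := by rw [hmdef]; linear_combination (norm := noncomm_ring) (e₁ * r) * h22
  have l2m : e₂ * m = 0 := by rw [hmdef]; linear_combination (norm := noncomm_ring) h21 * (r * e₂)
  have rm1 : m * e₁ = 0 := by rw [hmdef]; linear_combination (norm := noncomm_ring) (e₁ * r) * h21
  -- facts about u'
  have he1u : e₁ * u' = u' := by
    linear_combination (norm := noncomm_ring) e₁ * huv - huv - l1d₁ - l1d₁ * u'
  have hu'e1 : u' * e₁ = u' := by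
    linear_combination (norm := noncomm_ring) hvu * e₁ - hvu - rd₁1 - u' * rd₁1
  have h2u : e₂ * u' = 0 := by
    linear_combination (norm := noncomm_ring) h21 * u' - e₂ * he1u
  have hu2 : u' * e₂ = 0 := by
    linear_combination (norm := noncomm_ring) u' * h12 - hu'e1 * e₂
  have hd1u : d₁ * u' = -u' - d₁ := by
    linear_combination (norm := noncomm_ring) huv
  have hu1d : u' * d₁ = -u' - d₁ := by
    linear_combination (norm := noncomm_ring) hvu
  -- zero products among atoms
  have zB : d₂ * u' = 0 := by
    rw [hd₂def]; linear_combination (norm := noncomm_ring) (e₂ * r) * h2u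
  have zC : m * u' = 0 := by
    rw [hmdef]; linear_combination (norm := noncomm_ring) (e₁ * r) * h2u
  have zF : u' * d₂ = 0 := by
    rw [hd₂def]; linear_combination (norm := noncomm_ring) hu2 * (r * e₂)
  have zH : u' * n = 0 := by
    rw [hndef]; linear_combination (norm := noncomm_ring) hu2 * (r * e₁)
  have zD : d₂ * m = 0 := by
    rw [hd₂def, hmdef]; linear_combination (norm := noncomm_ring) (e₂ * r) * h21 * (r * e₂)
  have zE : m * m = 0 := by
    rw [hmdef]; linear_combination (norm := noncomm_ring) (e₁ * r) * h21 * (r * e₂)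
  have zG : n * d₂ = 0 := by
    rw [hndef, hd₂def]; linear_combination (norm := noncomm_ring) (e₂ * r) * h12 * (r * e₂)
  have zI : n * n = 0 := by
    rw [hndef]; linear_combination (norm := noncomm_ring) (e₂ * r) * h12 * (r * e₁)
  -- decomposition of r
  have hdec : r = d₁ + n + m + d₂ := by
    rw [hd₁def, hndef, hmdef, hd₂def]
    linear_combination (norm := noncomm_ring) - hsum * (r * (e₁ + e₂)) - r * hsum + hsum * r - hsum * r
  refine ⟨n + n * u', R.add_mem hnR (hmul n hnR u' hu'R),
    d₁ + d₂ - (n * m + n * (u' * m)),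
    R.sub_mem (R.add_mem hd₁R hd₂R)
      (R.add_mem (hmul n hnR m hmR) (hmul n hnR _ (hmul u' hu'R m hmR))),
    m + u' * m, R.add_mem hmR (hmul u' hu'R m hmR), ?_, ?_, ?_, ?_⟩
  · -- e₂ * a * e₁ = a
    linear_combination (norm := noncomm_ring)
      l2n * e₁ + rn1 + l2n * (u' * e₁) + n * hu'e1
  · -- diagonal condition for b
    linear_combination (norm := noncomm_ring)
      l1d₁ * e₁ + rd₁1 + l1d₂ * e₁ - l1n * (m * e₁) - l1n * (u' * (m * e₁))
      + l2d₁ * e₂ + l2d₂ * e₂ + rd₂2 - l2n * (m * e₂) - n * rm2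
      - l2n * (u' * (m * e₂)) - (n * u') * rm2
  · -- e₁ * c * e₂ = c
    linear_combination (norm := noncomm_ring)
      l1m * e₂ + rm2 + he1u * (m * e₂) + u' * rm2
  · -- the factorization
    have step1 : (1 + (d₁ + d₂ - (n * m + n * (u' * m)))) * (1 + (m + u' * m))
        = 1 + (d₁ + d₂ - (n * m + n * (u' * m))) + m := by
      linear_combination (norm := noncomm_ring)
        hd1u * m + zD + zB * m - (n + n * u') * zE - ((n + n * u') * zC) * m
        - n * zE - n * (zC * m) + n * zE + n * (zC * m)
    rw [mul_assoc, step1]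
    linear_combination (norm := noncomm_ring)
      hdec - n * hu1d - zG - n * zF
      + zI * m + (zI * u') * m + (n * zH) * m + ((n * zH) * u') * m
end

section
/- With the notation of the previous statement (O a DVR, Λ a lattice sequence of period e, a_{-m}(Λ) the associated filtration of End(V)): if i ∈ ℤ is such that Λ_i ≠ Λ_{i+1}, then a_{-m}(Λ)·Λ_i = Λ_{i-m}, i.e., the O-module generated by { a·v : a ∈ a_{-m}(Λ), v ∈ Λ_i } equals Λ_{i-m}. -/
/-!
Take an `O`-basis of `Λ i` in Smith normal form relative to `Λ (i + 1)`. As `Λ (i + 1) ≠ Λ i`,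
one of its coordinates `φ` maps `Λ (i + 1)` into `π O` while taking the value `1` on a basis
vector. Extended linearly over the fraction field to `V`, periodicity gives `φ (Λ j) ⊆ π ^ k O`
as soon as `j > i + (k - 1) e`, so for `y ∈ Λ (i - m)` the rank-one map `x ↦ φ x • y` lies in
`a_{-m}(Λ)`, and it sends that basis vector to `y`.
-/

open Pointwise Module IsLocalRing

theorem Submodule.exists_basis_coord_mem_maximalIdeal {R M : Type*} [CommRing R] [IsDomain R]
    [IsPrincipalIdealRing R] [IsLocalRing R] [AddCommGroup M] [Module R M] [Module.Free R M]
    [Module.Finite R M] {N : Submodule R M} (hN : N ≠ ⊤) :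
    ∃ (b : Basis (Free.ChooseBasisIndex R M) R M) (t : Free.ChooseBasisIndex R M),
      ∀ x ∈ N, b.coord t x ∈ maximalIdeal R := by
  by_contra! h
  obtain ⟨n, snf⟩ := N.smithNormalForm (Free.chooseBasis R M)
  refine hN (eq_top_iff.mpr ?_)
  rw [← snf.bM.span_eq, Submodule.span_le]
  rintro _ ⟨t, rfl⟩
  obtain ⟨x, hx, hxt⟩ := h snf.bM t
  by_cases ht : t ∈ Set.range snf.f
  · obtain ⟨s, rfl⟩ := ht
    have hcoord := LinearMap.congr_fun (snf.coord_apply_embedding_eq_smul_coord (i := s)) ⟨x, hx⟩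
    have hunit : IsUnit (snf.a s) := by
      by_contra hs
      apply hxt
      simp only [LinearMap.comp_apply, Submodule.subtype_apply, LinearMap.smul_apply,
        smul_eq_mul] at hcoord
      rw [hcoord]
      exact Ideal.mul_mem_right _ _ ((mem_maximalIdeal _).mpr hs)
    have hbasis : snf.bM (snf.f s) = (hunit.unit⁻¹ : Rˣ) • (snf.bN s : M) := by
      rw [snf.snf, Units.smul_def, smul_smul, hunit.val_inv_mul, one_smul]
    exact hbasis ▸ N.smul_of_tower_mem _ (snf.bN s).2
  · have hker := snf.le_ker_coord_of_notMem_range ht hx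
    rw [LinearMap.mem_ker] at hker
    exact (hxt (hker ▸ zero_mem _)).elim

theorem Module.Basis.extendOfIsLattice_repr_apply {R : Type*} (K : Type*) {V κ : Type*}
    [CommRing R] [Field K] [Algebra R K] [IsFractionRing R K] [AddCommGroup V] [Module K V]
    [Module R V] [IsScalarTower R K V] {M : Submodule R V} [M.IsLattice K] (b : Basis κ R M)
    (x : M) (k : κ) :
    (b.extendOfIsLattice K).repr x k = algebraMap R K (b.repr x k) := by
  classical
  have : ((b.extendOfIsLattice K).coord k).restrictScalars R ∘ₗ M.subtype =
      Algebra.linearMap R K ∘ₗ b.coord k :=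
    b.ext fun i ↦ by
      simp only [LinearMap.comp_apply, LinearMap.restrictScalars_apply, Submodule.subtype_apply,
        ← b.extendOfIsLattice_apply K, Basis.coord_apply, Basis.repr_self, Algebra.linearMap_apply,
        Finsupp.single_apply]
      split_ifs <;> simp
  exact LinearMap.congr_fun this x

section LatticeSequence

variable {O K V : Type*} [CommRing O] [Field K] [Algebra O K] [AddCommGroup V] [Module O V]
  [Module K V] [IsScalarTower O K V] {Λ : ℤ → Submodule O V} {π : O} {e : ℕ}

theorem algebraMap_smul_mem_add_iff (hπ : algebraMap O K π ≠ 0)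
    (hper : ∀ j : ℤ, Λ (j + e) = π • Λ j) (j : ℤ) (v : V) :
    algebraMap O K π • v ∈ Λ (j + e) ↔ v ∈ Λ j := by
  have hset : (π • Λ j : Set V) = algebraMap O K π • (Λ j : Set V) := by
    ext
    simp [Set.mem_smul_set, algebraMap_smul]
  rw [hper, ← SetLike.mem_coe, Submodule.coe_pointwise_smul, hset,
    Set.smul_mem_smul_set_iff₀ hπ, SetLike.mem_coe]

theorem zpow_smul_mem_add_mul_iff (hπ : algebraMap O K π ≠ 0)
    (hper : ∀ j : ℤ, Λ (j + e) = π • Λ j) (k j : ℤ) (v : V) :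
    algebraMap O K π ^ k • v ∈ Λ (j + k * e) ↔ v ∈ Λ j := by
  induction k using Int.induction_on generalizing j v with
  | zero => simp
  | succ n ih =>
    rw [← ih j v, ← algebraMap_smul_mem_add_iff hπ hper (j + n * e), smul_smul,
      ← zpow_one_add₀ hπ]
    ring_nf
  | pred n ih =>
    rw [← ih j v, ← algebraMap_smul_mem_add_iff hπ hper (j + (-n - 1) * e), smul_smul,
      ← zpow_one_add₀ hπ]
    ring_nf

theorem apply_smul_mem_sub (he : 0 < e) (hdec : ∀ j : ℤ, Λ (j + 1) ≤ Λ j)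
    (hπ : algebraMap O K π ≠ 0) (hper : ∀ j : ℤ, Λ (j + e) = π • Λ j) {i m : ℤ}
    {φ : V →ₗ[K] K} (hφ : ∀ u ∈ Λ (i + 1), ∃ d : O, φ u = algebraMap O K (π * d))
    {j : ℤ} {u y : V} (hu : u ∈ Λ j) (hy : y ∈ Λ (i - m)) : φ u • y ∈ Λ (j - m) := by
  set c := algebraMap O K π
  -- `k = ⌈(j - i) / e⌉`
  obtain ⟨k, hk_le, hk_lt⟩ : ∃ k : ℤ, j - i ≤ k * e ∧ k * e < j - i + e := by
    refine ⟨(j - i + e - 1) / e, ?_, ?_⟩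
    · have := Int.lt_ediv_add_one_mul_self (j - i + e - 1) (b := e) (by omega)
      linarith
    · have := Int.ediv_mul_le (j - i + e - 1) (b := e) (by omega)
      linarith
  have hanti : Antitone Λ := antitone_int_of_succ_le hdec
  have hu' : c ^ (1 - k) • u ∈ Λ (i + 1) := by
    rw [← zpow_smul_mem_add_mul_iff hπ hper (k - 1), smul_smul, ← zpow_add₀ hπ]
    simpa using hanti (by linarith : i + 1 + (k - 1) * e ≤ j) hu
  obtain ⟨d, hd⟩ := hφ _ hu'
  have hφu : φ u = c ^ k * algebraMap O K d :=
    calc φ u = φ (c ^ (k - 1) • c ^ (1 - k) • u) := by rw [smul_smul, ← zpow_add₀ hπ]; simp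
      _ = c ^ (k - 1) * c * algebraMap O K d := by
        rw [map_smul, hd, map_mul, smul_eq_mul, mul_assoc]
      _ = c ^ k * algebraMap O K d := by rw [← zpow_add_one₀ hπ, sub_add_cancel]
  have hdy : c ^ k • d • y ∈ Λ (i - m + k * e) :=
    (zpow_smul_mem_add_mul_iff hπ hper k _ _).mpr ((Λ _).smul_mem d hy)
  rw [hφu, mul_smul, algebraMap_smul]
  exact hanti (by linarith) hdy

end LatticeSequence

/-- If `Λ_i` is a jump of the lattice sequence `Λ`, then
`a_{-m}(Λ) · Λ_i = Λ_{i-m}`. -/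
theorem stmt_18 {O : Type*} [CommRing O] [IsDomain O] [IsDiscreteValuationRing O]
    {V : Type*} [AddCommGroup V] [Module O V]
    [Module (FractionRing O) V] [IsScalarTower O (FractionRing O) V]
    (π : O) (hπ : Irreducible π)
    (e : ℕ) (he : 0 < e)
    (Λ : ℤ → Submodule O V)
    (hdec : ∀ j : ℤ, Λ (j + 1) ≤ Λ j)
    (hper : ∀ j : ℤ, Λ (j + e) = π • Λ j)
    (hlat : ∀ j : ℤ, (Λ j).FG ∧ Submodule.span (FractionRing O) (Λ j : Set V) = ⊤)
    (m i : ℤ) (hjump : Λ i ≠ Λ (i + 1)) :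
    Submodule.span O {y : V | ∃ f : V →ₗ[FractionRing O] V,
        (∀ j : ℤ, ∀ x ∈ Λ j, f x ∈ Λ (j - m)) ∧ ∃ x ∈ Λ i, y = f x} = Λ (i - m) := by
  have hπK : algebraMap O (FractionRing O) π ≠ 0 :=
    (map_ne_zero_iff _ (IsFractionRing.injective O _)).mpr hπ.ne_zero
  have : (Λ i).IsLattice (FractionRing O) := ⟨(hlat i).1, (hlat i).2⟩
  have hN : (Λ (i + 1)).comap (Λ i).subtype ≠ ⊤ := fun h ↦
    hjump <| le_antisymm (fun u hu ↦ (h ▸ Submodule.mem_top : (⟨u, hu⟩ : Λ i) ∈ _)) (hdec i)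
  obtain ⟨b, t, hbt⟩ := Submodule.exists_basis_coord_mem_maximalIdeal hN
  set φ := (b.extendOfIsLattice (FractionRing O)).coord t
  have hφ : ∀ u ∈ Λ (i + 1), ∃ d : O, φ u = algebraMap O _ (π * d) := by
    intro u hu
    obtain ⟨d, hd⟩ := Ideal.mem_span_singleton.mp (hπ.maximalIdeal_eq ▸ hbt ⟨u, hdec i hu⟩ hu)
    exact ⟨d, hd ▸ b.extendOfIsLattice_repr_apply (FractionRing O) ⟨u, hdec i hu⟩ t⟩
  refine le_antisymm (Submodule.span_le.mpr ?_) fun y hy ↦ Submodule.subset_span ?_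
  · rintro _ ⟨f, hf, x, hx, rfl⟩
    exact hf i x hx
  · refine ⟨φ.smulRight y, fun j u hu ↦ apply_smul_mem_sub he hdec hπK hper hφ hu hy,
      b t, (b t).2, ?_⟩
    rw [LinearMap.smulRight_apply, Basis.coord_apply, ← b.extendOfIsLattice_apply (FractionRing O),
      Basis.repr_self, Finsupp.single_eq_same, one_smul]
end

section
/- Let J be a finite group, H a normal subgroup with J/H abelian of order n², and let θ : H → ℂˣ be a J-invariant character such that the alternating pairing k_θ(xH,yH) = θ([x,y]) on J/H is non-degenerate (its radical is trivial). Then there exists a unique irreducible complex representation η of J (up to isomorphism) whose restriction to H contains θ; moreover dim η = n and the restriction of η to H is θ-isotypic. -/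
/-! The eigenvectors of `H` with eigencharacter `θ` form a `J`-stable subspace of any
representation, because `θ` is `J`-invariant. So a minimal nonzero subrepresentation of it inside
the regular representation is irreducible and `θ`-isotypic, and every irreducible representation
containing `θ` is `θ`-isotypic. Non-degeneracy makes the character of a `θ`-isotypic
representation vanish off `H`: for `g ∉ H` some `y` has `y g y⁻¹ = c g` with `θ c ≠ 1`. Hence
`⟨χ_V, χ_W⟩ = dim V · dim W / [J : H]`, and orthogonality of irreducible characters gives
`(dim V)² = [J : H] = n²` and `V ≅ W`. -/

universe u

namespace Representation

section Irreducible

variable {k G V : Type*} [Field k] [Monoid G] [AddCommGroup V] [Module k V]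
  (ρ : Representation k G V)

theorem isIrreducible_iff_forall_submodule :
    ρ.IsIrreducible ↔ Nontrivial V ∧
      ∀ U : Submodule k V, (∀ g, ∀ u ∈ U, ρ g u ∈ U) → U = ⊥ ∨ U = ⊤ := by
  constructor
  · intro h
    refine ⟨?_, fun U hU => ?_⟩
    · exact not_subsingleton_iff_nontrivial.mp fun _ =>
        bot_ne_top (α := Subrepresentation ρ) (Subrepresentation.ext (Subsingleton.elim _ _))
    · exact (eq_bot_or_eq_top (⟨U, fun g _ hv => hU g _ hv⟩ : Subrepresentation ρ)).imp
        (congrArg Subrepresentation.toSubmodule) (congrArg Subrepresentation.toSubmodule)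
  · rintro ⟨hV, h⟩
    exact
      { exists_pair_ne := ⟨⊥, ⊤, fun he => bot_ne_top (congrArg Subrepresentation.toSubmodule he)⟩
        eq_bot_or_eq_top := fun σ =>
          (h σ.toSubmodule σ.apply_mem_toSubmodule).imp Subrepresentation.ext
            Subrepresentation.ext }

theorem exists_isIrreducible_subrepresentation [FiniteDimensional k V] (E : Submodule k V)
    (hE : ∀ g, E ≤ E.comap (ρ g)) (hE0 : E ≠ ⊥) :
    ∃ (U : Submodule k V) (hU : ∀ g, U ≤ U.comap (ρ g)), U ≤ E ∧
      (ρ.subrepresentation U hU).IsIrreducible := by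
  obtain ⟨U, ⟨hU0, hU, hUE⟩, hmin⟩ := exists_minimal_of_wellFoundedLT
    (fun U : Submodule k V => U ≠ ⊥ ∧ (∀ g, U ≤ U.comap (ρ g)) ∧ U ≤ E) ⟨E, hE0, hE, le_rfl⟩
  refine ⟨U, hU, hUE, (isIrreducible_iff_forall_submodule _).mpr
    ⟨Submodule.nontrivial_iff_ne_bot.mpr hU0, fun U' hU' => ?_⟩⟩
  have hmap : ∀ g, U'.map U.subtype ≤ (U'.map U.subtype).comap (ρ g) := by
    rintro g _ ⟨u, hu, rfl⟩
    exact ⟨_, hU' g u hu, rfl⟩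
  have hle : U'.map U.subtype ≤ U := Submodule.map_subtype_le U U'
  rw [← Submodule.comap_map_eq_of_injective U.injective_subtype U',
    Submodule.comap_subtype_eq_top]
  by_cases h0 : U'.map U.subtype = ⊥
  · left
    rw [h0, Submodule.comap_bot, Submodule.ker_subtype]
  · exact Or.inr (hmin ⟨h0, hmap, hle.trans hUE⟩ hle)

end Irreducible

section Isotypic

variable {k G V : Type*} [Field k] [Group G] [AddCommGroup V] [Module k V]
  (ρ : Representation k G V) {H : Subgroup G} (θ : H →* kˣ)

def IsIsotypic : Prop :=
  ∀ (h : H) (v : V), ρ h v = (θ h : k) • v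

def isotypicSubmodule : Submodule k V :=
  ⨅ h : H, Module.End.eigenspace (ρ h) (θ h : k)

theorem mem_isotypicSubmodule {v : V} :
    v ∈ isotypicSubmodule ρ θ ↔ ∀ h : H, ρ h v = (θ h : k) • v := by
  simp only [isotypicSubmodule, Submodule.mem_iInf, Module.End.mem_eigenspace_iff]

variable [H.Normal] (hinv : ∀ (j : G) (h h' : H), j * (h : G) * j⁻¹ = (h' : G) → θ h' = θ h)
include hinv

theorem isotypicSubmodule_le_comap (g : G) :
    isotypicSubmodule ρ θ ≤ (isotypicSubmodule ρ θ).comap (ρ g) := by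
  intro v hv
  rw [Submodule.mem_comap, mem_isotypicSubmodule]
  intro h
  have hconj : g⁻¹ * (h : G) * g ∈ H := by simpa using Subgroup.Normal.conj_mem ‹_› _ h.2 g⁻¹
  have hθ : θ ⟨_, hconj⟩ = θ h := (hinv g ⟨_, hconj⟩ h (by simp [mul_assoc])).symm
  calc ρ h (ρ g v) = ρ g (ρ (g⁻¹ * h * g) v) := by
        simp [← Module.End.mul_apply, ← map_mul, mul_assoc]
    _ = (θ h : k) • ρ g v := by rw [(mem_isotypicSubmodule ρ θ).mp hv ⟨_, hconj⟩, hθ, map_smul]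

theorem isIsotypic_of_isIrreducible [ρ.IsIrreducible] {v : V} (hv0 : v ≠ 0)
    (hv : ∀ h : H, ρ h v = (θ h : k) • v) : ρ.IsIsotypic θ := by
  obtain ⟨-, hsub⟩ := (isIrreducible_iff_forall_submodule ρ).mp ‹_›
  rcases hsub _ (fun g _ hu => isotypicSubmodule_le_comap ρ θ hinv g hu) with hbot | htop
  · exact absurd ((Submodule.mem_bot k).mp (hbot ▸ (mem_isotypicSubmodule ρ θ).mpr hv)) hv0
  · exact fun h w => (mem_isotypicSubmodule ρ θ).mp (htop ▸ Submodule.mem_top) h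

end Isotypic

open scoped MonoidAlgebra in
theorem exists_leftRegular_eigenvector {k G : Type*} [Field k] [Group G] [Finite G]
    {H : Subgroup G} (θ : H →* kˣ) :
    ∃ e : k[G], e ≠ 0 ∧ ∀ h : H, leftRegular k G h e = (θ h : k) • e := by
  classical
  have := Fintype.ofFinite G
  let f : G → k := fun x => if hx : x ∈ H then ((θ ⟨x, hx⟩)⁻¹ : kˣ) else 0
  refine ⟨MonoidAlgebra.ofCoeff (Finsupp.equivFunOnFinite.symm f), fun he => ?_, fun h => ?_⟩
  · have := congrArg (fun e => e.coeff 1) he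
    simp [f] at this
  · ext x
    simp only [coeff_ofMulAction, MonoidAlgebra.coeff_smul, Finsupp.coe_equivFunOnFinite_symm,
      Finsupp.smul_apply, smul_eq_mul, f]
    by_cases hx : x ∈ H
    · have hx' : (h : G)⁻¹ * x ∈ H := H.mul_mem (inv_mem h.2) hx
      rw [dif_pos hx, dif_pos hx', show (⟨(h : G)⁻¹ * x, hx'⟩ : H) = h⁻¹ * ⟨x, hx⟩ from rfl]
      simp [mul_comm]
    · have hx' : (h : G)⁻¹ * x ∉ H := fun hx' => hx (by simpa using H.mul_mem h.2 hx')
      rw [dif_neg hx, dif_neg hx', mul_zero]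

theorem exists_fdRep_isIrreducible_isIsotypic {k G : Type u} [Field k] [Group G] [Finite G]
    {H : Subgroup G} [H.Normal] (θ : H →* kˣ)
    (hinv : ∀ (j : G) (h h' : H), j * (h : G) * j⁻¹ = (h' : G) → θ h' = θ h) :
    ∃ V : FDRep k G, IsIrreducible V.ρ ∧ IsIsotypic V.ρ θ := by
  obtain ⟨e, he0, he⟩ := exists_leftRegular_eigenvector θ
  have hE0 : isotypicSubmodule (leftRegular k G) θ ≠ ⊥ := fun hE =>
    he0 <| (Submodule.mem_bot k).mp <| hE ▸ (mem_isotypicSubmodule _ θ).mpr he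
  obtain ⟨U, hU, hUE, hirr⟩ := exists_isIrreducible_subrepresentation _ _
    (isotypicSubmodule_le_comap _ θ hinv) hE0
  exact ⟨FDRep.of (subrepresentation _ U hU), hirr,
    fun h u => Subtype.ext ((mem_isotypicSubmodule _ θ).mp (hUE u.2) h)⟩

section Character

variable {k G V W : Type*} [Field k] [Group G] [AddCommGroup V] [Module k V]
  [AddCommGroup W] [Module k W] (ρ : Representation k G V) (σ : Representation k G W)
  {H : Subgroup G} {θ : H →* kˣ}

theorem character_eq_zero_of_conj_eq_smul {c g y : G} {a : k} (hc : ρ c = a • 1) (ha : a ≠ 1)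
    (hconj : y * g * y⁻¹ = c * g) : ρ.character g = 0 := by
  have h : a * ρ.character g = ρ.character g := by
    calc a * ρ.character g = ρ.character (c * g) := by simp [character, hc]
      _ = ρ.character g := by rw [← hconj, char_conj]
  exact (mul_left_eq_self₀.mp h).resolve_left ha

variable {ρ σ}

theorem IsIsotypic.character_eq_zero (hρ : ρ.IsIsotypic θ)
    (hab : ∀ x y : G, x * y * x⁻¹ * y⁻¹ ∈ H)
    (hnd : ∀ x : G, (∀ y : G, θ ⟨x * y * x⁻¹ * y⁻¹, hab x y⟩ = 1) → x ∈ H)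
    {g : G} (hg : g ∉ H) : ρ.character g = 0 := by
  obtain ⟨y, hy⟩ : ∃ y, θ ⟨g * y * g⁻¹ * y⁻¹, hab g y⟩ ≠ 1 := by
    by_contra! h
    exact hg (hnd g h)
  let c : H := ⟨y * g * y⁻¹ * g⁻¹, hab y g⟩
  have hc : θ c ≠ 1 := by
    rwa [show c = (⟨g * y * g⁻¹ * y⁻¹, hab g y⟩ : H)⁻¹ from Subtype.ext (by simp [c, mul_assoc]),
      map_inv, inv_ne_one]
  exact character_eq_zero_of_conj_eq_smul ρ (LinearMap.ext (hρ c)) (Units.val_eq_one.not.mpr hc)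
    (y := y) (by simp [c])

variable [FiniteDimensional k V] [FiniteDimensional k W]

theorem IsIsotypic.character_apply (hρ : ρ.IsIsotypic θ) (h : H) :
    ρ.character h = θ h * Module.finrank k V := by
  rw [character, show ρ h = (θ h : k) • 1 from LinearMap.ext (hρ h), map_smul,
    LinearMap.trace_one, smul_eq_mul]

theorem IsIsotypic.sum_character_mul_character_inv [Fintype G] (hρ : ρ.IsIsotypic θ)
    (hσ : σ.IsIsotypic θ) (hab : ∀ x y : G, x * y * x⁻¹ * y⁻¹ ∈ H)
    (hnd : ∀ x : G, (∀ y : G, θ ⟨x * y * x⁻¹ * y⁻¹, hab x y⟩ = 1) → x ∈ H) :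
    ∑ g, ρ.character g * σ.character g⁻¹ =
      Module.finrank k V * Module.finrank k W * Nat.card H := by
  classical
  have hterm : ∀ g : G, ρ.character g * σ.character g⁻¹ =
      if g ∈ H then (Module.finrank k V * Module.finrank k W : k) else 0 := by
    intro g
    split_ifs with hg
    · rw [hρ.character_apply ⟨g, hg⟩, show g⁻¹ = ((⟨g, hg⟩⁻¹ : H) : G) from rfl,
        hσ.character_apply, map_inv, mul_mul_mul_comm, ← Units.val_mul, mul_inv_cancel, Units.val_one, one_mul]
    · rw [hρ.character_eq_zero hab hnd hg, zero_mul]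
  rw [Fintype.sum_congr _ _ hterm, Finset.sum_ite, Finset.sum_const_zero, add_zero,
    Finset.sum_const, nsmul_eq_mul, mul_comm, Nat.card_eq_fintype_card, Fintype.card_subtype]

end Character

section Orthogonality

variable {k G V W : Type*} [Field k] [IsAlgClosed k] [CharZero k] [Group G] [Fintype G]
  [AddCommGroup V] [Module k V] [FiniteDimensional k V]
  [AddCommGroup W] [Module k W] [FiniteDimensional k W]
  {ρ : Representation k G V} {σ : Representation k G W} {H : Subgroup G} {θ : H →* kˣ}
  (hab : ∀ x y : G, x * y * x⁻¹ * y⁻¹ ∈ H)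
  (hnd : ∀ x : G, (∀ y : G, θ ⟨x * y * x⁻¹ * y⁻¹, hab x y⟩ = 1) → x ∈ H)
include hnd

theorem IsIsotypic.finrank_sq_eq_index [ρ.IsIrreducible] (hρ : ρ.IsIsotypic θ) :
    Module.finrank k V ^ 2 = H.index := by
  have : Invertible (Nat.card G : k) := invertibleOfNonzero (Nat.cast_ne_zero.mpr Nat.card_pos.ne')
  have h := char_orthonormal ρ ρ
  rw [if_pos ⟨Equiv.refl ρ⟩, hρ.sum_character_mul_character_inv hρ hab hnd,
    inv_mul_eq_one₀ (Nat.cast_ne_zero.mpr Nat.card_pos.ne'), ← H.index_mul_card] at h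
  have h' : Module.finrank k V ^ 2 * Nat.card H = H.index * Nat.card H := by
    rw [sq]; exact_mod_cast h.symm
  exact Nat.eq_of_mul_eq_mul_right Nat.card_pos h'

theorem IsIsotypic.nonempty_equiv [ρ.IsIrreducible] [σ.IsIrreducible] (hρ : ρ.IsIsotypic θ)
    (hσ : σ.IsIsotypic θ) : Nonempty (ρ.Equiv σ) := by
  have : Invertible (Nat.card G : k) := invertibleOfNonzero (Nat.cast_ne_zero.mpr Nat.card_pos.ne')
  have := ((isIrreducible_iff_forall_submodule ρ).mp ‹_›).1
  have := ((isIrreducible_iff_forall_submodule σ).mp ‹_›).1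
  have h := char_orthonormal σ ρ
  rw [hσ.sum_character_mul_character_inv hρ hab hnd] at h
  by_contra hne
  rw [if_neg hne] at h
  simp [Module.finrank_pos.ne', Nat.card_pos.ne'] at h

end Orthogonality

end Representation

open Representation

/-- Stone–von Neumann / finite Heisenberg: a `J`-invariant character `θ` of a
normal subgroup `H` with abelian quotient of order `n²`, whose commutator
pairing is non-degenerate, is contained in a unique irreducible representation
`η` of `J`; moreover `dim η = n` and `η|_H` is `θ`-isotypic. -/
theorem stmt_19 {J : Type} [Group J] [Fintype J] (H : Subgroup J) [H.Normal]
    (n : ℕ)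
    (hab : ∀ x y : J, x * y * x⁻¹ * y⁻¹ ∈ H)
    (hcard : Nat.card (J ⧸ H) = n ^ 2)
    (θ : H →* ℂˣ)
    (hinv : ∀ (j : J) (h h' : H), j * (h : J) * j⁻¹ = (h' : J) → θ h' = θ h)
    (hnd : ∀ x : J, (∀ y : J, θ ⟨x * y * x⁻¹ * y⁻¹, hab x y⟩ = 1) → x ∈ H) :
    ∃ V : FDRep ℂ J,
      (∀ U : Submodule ℂ V, (∀ g : J, ∀ u ∈ U, V.ρ g u ∈ U) → U = ⊥ ∨ U = ⊤) ∧
      (∃ v : V, v ≠ 0) ∧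
      (∀ (h : H) (v : V), V.ρ (h : J) v = (θ h : ℂ) • v) ∧
      Module.finrank ℂ V = n ∧
      (∀ W : FDRep ℂ J,
        (∀ U : Submodule ℂ W, (∀ g : J, ∀ u ∈ U, W.ρ g u ∈ U) → U = ⊥ ∨ U = ⊤) →
        (∃ w : W, w ≠ 0 ∧ ∀ h : H, W.ρ (h : J) w = (θ h : ℂ) • w) →
        ∃ φ : V ≃ₗ[ℂ] W, ∀ (g : J) (v : V), φ (V.ρ g v) = W.ρ g (φ v)) := by
  obtain ⟨V, hV, hVθ⟩ := exists_fdRep_isIrreducible_isIsotypic θ hinv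
  obtain ⟨_, hVsub⟩ := (isIrreducible_iff_forall_submodule V.ρ).mp hV
  refine ⟨V, hVsub, exists_ne 0, hVθ, ?_, fun W hWsub ⟨w, hw0, hw⟩ => ?_⟩
  · have hsq := hVθ.finrank_sq_eq_index hab hnd
    rw [Subgroup.index, hcard] at hsq
    exact Nat.pow_left_injective two_ne_zero hsq
  · have hW : IsIrreducible W.ρ :=
      (isIrreducible_iff_forall_submodule W.ρ).mpr ⟨⟨w, 0, hw0⟩, hWsub⟩
    obtain ⟨φ⟩ := hVθ.nonempty_equiv hab hnd (isIsotypic_of_isIrreducible W.ρ θ hinv hw0 hw)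
    exact ⟨φ.toLinearEquiv, φ.isIntertwining⟩
end
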